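/- Let n ≥ 1 be an integer, λ_1, λ_2 real numbers with λ_1² < 1 and λ_2² < 1, and h(i,k,α) real numbers for i,k ∈ {1,2} and 1 ≤ α ≤ n, symmetric in (i,k) and trace-free (h(1,1,α) + h(2,2,α) = 0 for every α). With H(i,k,j) = h(i,k,j) if j ≤ n and H(i,k,j) = 0 if j > n, suppose equality holds: ∑_{i,k=1}^2 ∑_{α=1}^n h(i,k,α)² − 2 λ_1 λ_2 [ H(1,1,1)H(1,2,2) + H(1,2,1)H(2,2,2) + H(1,1,2)H(1,2,1) + H(1,2,2)H(2,2,1) ] − 2 ∑_{i,k=1}^2 λ_i² H(i,k,i)² = 0. Then h(i,k,α) = 0 for all i, k, α. -/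

import Mathlib

/-!
Write `|M|²` for the sum of squares of the entries of a 2×2 matrix, `h^α = (h i k α)_{ik}` and
`H^j = (H(i,k,j))_{ik}`. A symmetric trace-free 2×2 matrix carries half of `|M|²` in each row,
and the `λ₁λ₂` term equals `H(1,2,2)·tr H^1 + H(1,2,1)·tr H^2 = 0`. Equality in (5.2) therefore
reads `∑_α |h^α|² = λ₁²|H^1|² + λ₂²|H^2|²`, while `|H^1|² + |H^2|² ≤ ∑_α |h^α|²` since the `H^j`
are among the `h^α` or zero. As `λ_j² < 1`, all these sums vanish.
-/

/-- Extension of the second-fundamental-form components `h i k α` (`α < n`) by zero to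
a third index ranging over `Fin 2`: `H(i,k,j) = h(i,k,j)` if `j ≤ n`, and `0` if `j > n`.
(Indices are 0-based: `0, 1` stand for the paper's `1, 2`.) -/
def Hext2 {n : ℕ} (h : Fin 2 → Fin 2 → Fin n → ℝ) (i k : Fin 2) (j : Fin 2) : ℝ :=
  if hj : (j : ℕ) < n then h i k ⟨j, hj⟩ else 0

open Finset

theorem Fin.sum_dite_val_lt_le_sum {m n : ℕ} {f : Fin n → ℝ} (hf : ∀ α, 0 ≤ f α) :
    ∑ j : Fin m, (if hj : (j : ℕ) < n then f ⟨j, hj⟩ else 0) ≤ ∑ α, f α := by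
  set F : ℕ → ℝ := fun j => if hj : j < n then f ⟨j, hj⟩ else 0
  have hF : ∀ j, 0 ≤ F j := fun j => by unfold F; split_ifs <;> simp [hf]
  have hfF : ∑ α, f α = ∑ j ∈ range n, F j := by
    rw [← Fin.sum_univ_eq_sum_range]
    exact sum_congr rfl fun α _ => by simp [F]
  calc ∑ j : Fin m, F j = ∑ j ∈ range m, F j := Fin.sum_univ_eq_sum_range F m
    _ ≤ ∑ j ∈ range (max m n), F j :=
      sum_le_sum_of_subset_of_nonneg (range_subset_range.2 (le_max_left m n))
        fun j _ _ => hF j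
    _ = ∑ α, f α := by
      rw [hfF]
      refine (sum_subset (range_subset_range.2 (le_max_right m n)) fun j _ hj => ?_).symm
      simp [F, mem_range.not.1 hj]

theorem Matrix.two_mul_sum_sq_row_of_isSymm_of_trace_eq_zero {R : Type*} [CommRing R]
    {A : Matrix (Fin 2) (Fin 2) R} (hA : A.IsSymm) (htr : A.trace = 0) (i : Fin 2) :
    2 * ∑ k, A i k ^ 2 = ∑ i, ∑ k, A i k ^ 2 := by
  have h10 : A 1 0 = A 0 1 := hA.apply 0 1
  rw [trace_fin_two] at htr
  fin_cases i <;> simp only [Fin.sum_univ_two, Fin.zero_eta, Fin.mk_one, h10]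
  · linear_combination (A 0 0 - A 1 1) * htr
  · linear_combination (A 1 1 - A 0 0) * htr

theorem eq_zero_of_sum_le_of_eq_sum_mul {ι R : Type*} [Fintype ι] [Field R] [LinearOrder R]
    [IsStrictOrderedRing R] {E w : ι → R} {S : R} (hE : ∀ i, 0 ≤ E i) (hw : ∀ i, w i < 1)
    (hle : ∑ i, E i ≤ S) (hS : S = ∑ i, w i * E i) : S = 0 := by
  have hslack_pos : ∀ i, 0 < 1 - w i := fun i => sub_pos.2 (hw i)
  have hslack : ∑ i, (1 - w i) * E i = 0 := by
    refine le_antisymm ?_ (sum_nonneg fun i _ => mul_nonneg (hslack_pos i).le (hE i))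
    simp only [sub_mul, one_mul, sum_sub_distrib]
    linarith
  have hE0 : ∀ i, E i = 0 := fun i =>
    (mul_eq_zero.1 <| (sum_eq_zero_iff_of_nonneg fun i _ =>
      mul_nonneg (hslack_pos i).le (hE i)).1 hslack i (mem_univ i)).resolve_left
      (hslack_pos i).ne'
  simp [hS, hE0]

section
variable {n : ℕ} (h : Fin 2 → Fin 2 → Fin n → ℝ)

theorem Hext2_symm (hsymm : ∀ i k α, h i k α = h k i α) (i k j : Fin 2) :
    Hext2 h i k j = Hext2 h k i j := by
  unfold Hext2; split_ifs <;> simp [hsymm i k]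

theorem Hext2_trace (htrace : ∀ α, h 0 0 α + h 1 1 α = 0) (j : Fin 2) :
    Hext2 h 0 0 j + Hext2 h 1 1 j = 0 := by
  unfold Hext2; split_ifs <;> simp [htrace]

theorem sum_Hext2_sq_le :
    ∑ j, ∑ i, ∑ k, Hext2 h i k j ^ 2 ≤ ∑ α, ∑ i, ∑ k, h i k α ^ 2 := by
  have hsq : ∀ j, ∑ i, ∑ k, Hext2 h i k j ^ 2 =
      if hj : (j : ℕ) < n then ∑ i, ∑ k, h i k ⟨j, hj⟩ ^ 2 else 0 := by
    intro j; unfold Hext2; split_ifs <;> simp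
  simp only [hsq]
  exact Fin.sum_dite_val_lt_le_sum (f := fun α => ∑ i, ∑ k, h i k α ^ 2) fun α => by positivity

theorem sum_sq_eq_sum_lam_sq_mul_of_equality (lam : Fin 2 → ℝ)
    (hsymm : ∀ i k α, h i k α = h k i α)
    (htrace : ∀ α, h 0 0 α + h 1 1 α = 0)
    (heq : (∑ i, ∑ k, ∑ α, h i k α ^ 2) -
        2 * lam 0 * lam 1 *
          (Hext2 h 0 0 0 * Hext2 h 0 1 1 + Hext2 h 0 1 0 * Hext2 h 1 1 1 +
            Hext2 h 0 0 1 * Hext2 h 0 1 0 + Hext2 h 0 1 1 * Hext2 h 1 1 0) -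
        2 * (∑ i, ∑ k, lam i ^ 2 * Hext2 h i k i ^ 2) = 0) :
    ∑ α, ∑ i, ∑ k, h i k α ^ 2 = ∑ j, lam j ^ 2 * ∑ i, ∑ k, Hext2 h i k j ^ 2 := by
  have hcross : Hext2 h 0 0 0 * Hext2 h 0 1 1 + Hext2 h 0 1 0 * Hext2 h 1 1 1 +
      Hext2 h 0 0 1 * Hext2 h 0 1 0 + Hext2 h 0 1 1 * Hext2 h 1 1 0 = 0 := by
    linear_combination Hext2 h 0 1 1 * Hext2_trace h htrace 0 +
      Hext2 h 0 1 0 * Hext2_trace h htrace 1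
  have hrow : ∀ i, 2 * ∑ k, Hext2 h i k i ^ 2 = ∑ i', ∑ k, Hext2 h i' k i ^ 2 := fun i =>
    Matrix.two_mul_sum_sq_row_of_isSymm_of_trace_eq_zero
      (A := Matrix.of fun i' k => Hext2 h i' k i)
      (Matrix.IsSymm.ext fun _ _ => Hext2_symm h hsymm _ _ _)
      (by simpa [Matrix.trace_fin_two] using Hext2_trace h htrace i) i
  have hswap : ∑ i, ∑ k, ∑ α, h i k α ^ 2 = ∑ α, ∑ i, ∑ k, h i k α ^ 2 := by
    simp only [sum_comm (γ := Fin n)]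
  simp only [← mul_sum, ← hrow] at heq ⊢
  rw [hcross, hswap] at heq
  simp only [Fin.sum_univ_two] at heq ⊢
  linear_combination heq

end

theorem surface_equality_case_general (n : ℕ) (lam : Fin 2 → ℝ)
    (hlam : ∀ i, lam i ^ 2 < 1)
    (h : Fin 2 → Fin 2 → Fin n → ℝ)
    (hsymm : ∀ i k α, h i k α = h k i α)
    (htrace : ∀ α, h 0 0 α + h 1 1 α = 0)
    (heq : (∑ i, ∑ k, ∑ α, h i k α ^ 2) -
        2 * lam 0 * lam 1 *
          (Hext2 h 0 0 0 * Hext2 h 0 1 1 + Hext2 h 0 1 0 * Hext2 h 1 1 1 +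
            Hext2 h 0 0 1 * Hext2 h 0 1 0 + Hext2 h 0 1 1 * Hext2 h 1 1 0) -
        2 * (∑ i, ∑ k, lam i ^ 2 * Hext2 h i k i ^ 2) = 0) :
    ∀ i k α, h i k α = 0 := by
  have hzero : ∑ α, ∑ i, ∑ k, h i k α ^ 2 = 0 :=
    eq_zero_of_sum_le_of_eq_sum_mul (fun _ => by positivity) hlam (sum_Hext2_sq_le h)
      (sum_sq_eq_sum_lam_sq_mul_of_equality h lam hsymm htrace heq)
  intro i k α
  have hα := (sum_eq_zero_iff_of_nonneg fun _ _ => by positivity).1 hzero α (mem_univ α)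
  have hi := (sum_eq_zero_iff_of_nonneg fun _ _ => by positivity).1 hα i (mem_univ i)
  exact pow_eq_zero_iff two_ne_zero |>.1 <|
    (sum_eq_zero_iff_of_nonneg fun _ _ => by positivity).1 hi k (mem_univ k)

/-- **Equality case of inequality (5.2) of the paper.**  If the `h(i,k,α)` are symmetric
in `(i,k)` and trace-free, `λ₁² < 1`, `λ₂² < 1`, and equality holds in (5.2), then all
components `h(i,k,α)` vanish (the surface is totally geodesic). -/
theorem surface_equality_case (n : ℕ) (hn : 1 ≤ n) (lam : Fin 2 → ℝ)
    (hlam : ∀ i, lam i ^ 2 < 1)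
    (h : Fin 2 → Fin 2 → Fin n → ℝ)
    (hsymm : ∀ i k α, h i k α = h k i α)
    (htrace : ∀ α, h 0 0 α + h 1 1 α = 0)
    (heq : (∑ i, ∑ k, ∑ α, h i k α ^ 2) -
        2 * lam 0 * lam 1 *
          (Hext2 h 0 0 0 * Hext2 h 0 1 1 + Hext2 h 0 1 0 * Hext2 h 1 1 1 +
            Hext2 h 0 0 1 * Hext2 h 0 1 0 + Hext2 h 0 1 1 * Hext2 h 1 1 0) -
        2 * (∑ i, ∑ k, lam i ^ 2 * Hext2 h i k i ^ 2) = 0) :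
    ∀ i k α, h i k α = 0 :=
  surface_equality_case_general n lam hlam h hsymm htrace heq
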